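/- Suppose ‖φ(x,a)‖₂ ≤ R for all (x,a). For all ε > 0, the covering number of the softmax policy class Π(D_π) in the norm ‖π − π'‖_{∞,1} = max_x ∑_a |π(a|x) − π'(a|x)| satisfies log N(Π(D_π), ‖·‖_{∞,1}, ε) ≤ d log(1 + 2RD_π/ε). -/

import Mathlib

noncomputable section
open MeasureTheory Finset Matrix
open scoped BigOperators ENNReal

namespace Paper

variable {X A : Type*}

/-- Euclidean dot product on `Fin d → ℝ`. -/
def dotp {d : ℕ} (u v : Fin d → ℝ) : ℝ := ∑ i, u i * v i

/-- Euclidean norm on `Fin d → ℝ`. -/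
def nrm2 {d : ℕ} (u : Fin d → ℝ) : ℝ := Real.sqrt (∑ i, (u i) ^ 2)

/-- Squared weighted norm `uᵀ M u`. -/
def wnormSq {d : ℕ} (M : Matrix (Fin d) (Fin d) ℝ) (u : Fin d → ℝ) : ℝ := dotp u (M.mulVec u)

/-- Kullback–Leibler divergence between finitely supported distributions. -/
def KLdiv [Fintype A] (p q : A → ℝ) : ℝ := ∑ a, p a * Real.log (p a / q a)

/-- A stochastic policy. -/
def IsPolicy [Fintype A] (π : X → A → ℝ) : Prop :=
  (∀ x a, 0 ≤ π x a) ∧ (∀ x, ∑ a, π x a = 1)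

/-- A probability distribution over a finite set. -/
def IsDist [Fintype X] (ν : X → ℝ) : Prop := (∀ x, 0 ≤ ν x) ∧ ∑ x, ν x = 1

/-- A transition kernel. -/
def IsKernel [Fintype X] (p : X → A → X → ℝ) : Prop :=
  (∀ x a x', 0 ≤ p x a x') ∧ (∀ x a, ∑ x', p x a x' = 1)

/-- The softmax policy associated with parameter vector `θ`. -/
def softmax [Fintype A] {d : ℕ} (φ : X → A → Fin d → ℝ) (θ : Fin d → ℝ) (x : X) (a : A) : ℝ :=
  Real.exp (dotp (φ x a) θ) / ∑ a', Real.exp (dotp (φ x a') θ)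

/-- State-action distribution at step `k` of the process started from `ν₀` and following `π`. -/
def trajDist [Fintype X] [Fintype A] (p : X → A → X → ℝ) (ν₀ : X → ℝ) (π : X → A → ℝ) :
    ℕ → X → A → ℝ
  | 0 => fun x a => ν₀ x * π x a
  | k + 1 => fun x a => (∑ x', ∑ a', trajDist p ν₀ π k x' a' * p x' a' x) * π x a

/-- Normalized discounted state-action occupancy measure of policy `π`. -/
def occupancy [Fintype X] [Fintype A] (γ : ℝ) (p : X → A → X → ℝ) (ν₀ : X → ℝ)
    (π : X → A → ℝ) (x : X) (a : A) : ℝ :=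
  (1 - γ) * ∑' k : ℕ, γ ^ k * trajDist p ν₀ π k x a

/-- `k`-step state transition kernel of the Markov chain induced by policy `π`. -/
def kernelPow [Fintype X] [Fintype A] [DecidableEq X] (p : X → A → X → ℝ) (π : X → A → ℝ) :
    ℕ → X → X → ℝ
  | 0 => fun x y => if x = y then 1 else 0
  | k + 1 => fun x y => ∑ z, kernelPow p π k x z * ∑ a, π z a * p z a y

/-- The value function of policy `π`. -/
def vval [Fintype X] [Fintype A] [DecidableEq X] (γ : ℝ) (r : X → A → ℝ) (p : X → A → X → ℝ)
    (π : X → A → ℝ) (x : X) : ℝ :=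
  ∑' k : ℕ, γ ^ k * ∑ y, kernelPow p π k x y * ∑ a, π y a * r y a

/-- The action-value function of policy `π`. -/
def qval [Fintype X] [Fintype A] [DecidableEq X] (γ : ℝ) (r : X → A → ℝ) (p : X → A → X → ℝ)
    (π : X → A → ℝ) (x : X) (a : A) : ℝ :=
  r x a + γ * ∑ x', p x a x' * vval γ r p π x'

/-- The normalized discounted return of policy `π`. -/
def ret [Fintype X] [Fintype A] (γ : ℝ) (p : X → A → X → ℝ) (ν₀ : X → ℝ) (r : X → A → ℝ)
    (π : X → A → ℝ) : ℝ := ∑ x, ∑ a, occupancy γ p ν₀ π x a * r x a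

/-- The parametrized value-function candidate `v_{θ,π}`. -/
def vparam [Fintype A] {d : ℕ} (φ : X → A → Fin d → ℝ) (θ : Fin d → ℝ) (π : X → A → ℝ)
    (x : X) : ℝ := ∑ a, π x a * dotp θ (φ x a)

/-- `Ψ v`, where `Ψ` is the matrix with columns `ψ x`. -/
def psiApply [Fintype X] {d : ℕ} (ψ : X → Fin d → ℝ) (v : X → ℝ) : Fin d → ℝ :=
  ∑ x, v x • ψ x

/-- `Φᵀ μ`, the feature occupancy of a state-action measure `μ`. -/
def featOcc [Fintype X] [Fintype A] {d : ℕ} (φ : X → A → Fin d → ℝ) (μ : X → A → ℝ) :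
    Fin d → ℝ := ∑ x, ∑ a, μ x a • φ x a

/-- The parametrized occupancy candidate `μ_{λ,π}` built from columns `ψh`. -/
def muOf [Fintype X] {d : ℕ} (γ : ℝ) (ν₀ : X → ℝ) (ψh : X → Fin d → ℝ) (lam : Fin d → ℝ)
    (π : X → A → ℝ) (x : X) (a : A) : ℝ :=
  π x a * ((1 - γ) * ν₀ x + γ * dotp (ψh x) lam)

/-- The reduced Lagrangian `f(λ, π; θ)`. -/
def lag [Fintype X] [Fintype A] {d : ℕ} (γ : ℝ) (ν₀ : X → ℝ) (omg : Fin d → ℝ)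
    (ψ : X → Fin d → ℝ) (φ : X → A → Fin d → ℝ) (lam θv : Fin d → ℝ) (π : X → A → ℝ) : ℝ :=
  (1 - γ) * ∑ x, ν₀ x * vparam φ θv π x
    + dotp lam (omg + γ • psiApply ψ (vparam φ θv π) - θv)

/-- The regularized empirical covariance matrix `Λ̂`. -/
def covMat {d n : ℕ} (β : ℝ) (φi : Fin n → Fin d → ℝ) : Matrix (Fin d) (Fin d) ℝ :=
  β • (1 : Matrix (Fin d) (Fin d) ℝ) + (n : ℝ)⁻¹ • ∑ i, vecMulVec (φi i) (φi i)

/-- `Ψ̂ v`, where `Ψ̂` is the least-squares estimator of `Ψ`. -/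
def psiHatApply {X : Type*} {d n : ℕ} (β : ℝ) (φi : Fin n → Fin d → ℝ)
    (xs : Fin n → X) (v : X → ℝ) : Fin d → ℝ :=
  (covMat β φi)⁻¹.mulVec ((n : ℝ)⁻¹ • ∑ i, v (xs i) • φi i)

/-- `ψ̂ x`, the column of the least-squares estimator `Ψ̂` at state `x`. -/
def psiHatCol {X : Type*} [DecidableEq X] {d n : ℕ} (β : ℝ) (φi : Fin n → Fin d → ℝ)
    (xs : Fin n → X) (x : X) : Fin d → ℝ :=
  (covMat β φi)⁻¹.mulVec ((n : ℝ)⁻¹ • ∑ i, (if xs i = x then (1 : ℝ) else 0) • φi i)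

/-!
The map `θ ↦ π_θ` is `R`-Lipschitz from the Euclidean ball of radius `D_π` to `‖·‖_{∞,1}`:
`|⟨φ(x,a), θ - θ'⟩| ≤ R ‖θ - θ'‖`, and softmax is `1`-Lipschitz from the sup norm on logits to
the `ℓ¹` norm. Hence the policies of an `ε/R`-net of the ball form an `ε`-cover. A maximal
`ε/R`-separated subset of the ball is such a net, and since the balls of radius `ε/(2R)` about
its points are disjoint and lie in the ball of radius `D_π + ε/(2R)`, comparing volumes bounds
its size by `(1 + 2 R D_π / ε)^d`.
-/

open Metric Module
open scoped NNReal

section Packing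

variable {E : Type*} [NormedAddCommGroup E] [NormedSpace ℝ E] [FiniteDimensional ℝ E]

theorem card_le_of_isSeparated_of_subset_closedBall {T : Finset E} {x : E} {D : ℝ} {δ : ℝ≥0}
    (hD : 0 ≤ D) (hδ : 0 < δ) (hTD : (T : Set E) ⊆ closedBall x D)
    (hT : IsSeparated δ (T : Set E)) :
    (T.card : ℝ) ≤ (1 + 2 * D / δ) ^ finrank ℝ E := by
  borelize E
  set μ : Measure E := Measure.addHaar
  have hr : (0 : ℝ) < δ / 2 := by positivity
  have hdisj : (T : Set E).PairwiseDisjoint (fun t => ball t (δ / 2)) := by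
    intro s hs t ht hst
    have hst' : δ < nndist s t := ENNReal.coe_lt_coe.mp (edist_nndist s t ▸ hT hs ht hst)
    refine Set.disjoint_left.mpr fun z hzs hzt => ?_
    linarith [mem_ball'.mp hzs, mem_ball.mp hzt, dist_triangle s z t, NNReal.coe_lt_coe.mpr hst',
      coe_nndist s t]
  have hsub : ⋃ t ∈ T, ball t (δ / 2) ⊆ ball x (D + δ / 2) := by
    refine Set.iUnion₂_subset fun t ht z hz => mem_ball.mpr ?_
    linarith [mem_ball.mp hz, mem_closedBall.mp (hTD ht), dist_triangle z t x]
  have hvol : (T.card : ℝ≥0∞) * ENNReal.ofReal ((δ / 2) ^ finrank ℝ E)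
      ≤ ENNReal.ofReal ((D + δ / 2) ^ finrank ℝ E) := by
    refine (ENNReal.mul_le_mul_iff_left (measure_ball_pos μ (0 : E) one_pos).ne'
      measure_ball_lt_top.ne).mp ?_
    calc (T.card : ℝ≥0∞) * ENNReal.ofReal ((δ / 2) ^ finrank ℝ E) * μ (ball 0 1)
        = ∑ t ∈ T, μ (ball t (δ / 2)) := by
          simp only [Measure.addHaar_ball_of_pos μ _ hr, Finset.sum_const, nsmul_eq_mul, mul_assoc]
      _ = μ (⋃ t ∈ T, ball t (δ / 2)) :=
          (measure_biUnion_finset hdisj fun _ _ => measurableSet_ball).symm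
      _ ≤ μ (ball x (D + δ / 2)) := measure_mono hsub
      _ = ENNReal.ofReal ((D + δ / 2) ^ finrank ℝ E) * μ (ball 0 1) :=
          Measure.addHaar_ball_of_pos μ _ (by positivity)
  rw [← ENNReal.ofReal_natCast, ← ENNReal.ofReal_mul (by positivity),
    ENNReal.ofReal_le_ofReal_iff (by positivity), ← le_div_iff₀ (by positivity),
    ← div_pow] at hvol
  calc (T.card : ℝ) ≤ ((D + δ / 2) / (δ / 2)) ^ finrank ℝ E := hvol
    _ = (1 + 2 * D / δ) ^ finrank ℝ E := by
      congr 1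
      field_simp
      ring

theorem packingNumber_closedBall_le {x : E} {D : ℝ} {δ : ℝ≥0} (hD : 0 ≤ D) (hδ : 0 < δ) :
    packingNumber δ (closedBall x D) ≤ ⌊(1 + 2 * D / δ) ^ finrank ℝ E⌋₊ := by
  refine iSup₂_le fun C hC => iSup_le fun hsep => ?_
  by_contra! hlt
  obtain ⟨S, hSC, hS⟩ := Set.exists_subset_encard_eq (Order.add_one_le_of_lt hlt)
  have hSfin : S.Finite := Set.finite_of_encard_eq_coe (k := _ + 1) (by simpa using hS)
  have hcard := card_le_of_isSeparated_of_subset_closedBall (T := hSfin.toFinset) hD hδ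
    (by simpa using hSC.trans hC) (by simpa using hsep.subset hSC)
  rw [hSfin.encard_eq_coe_toFinset_card] at hS
  have : hSfin.toFinset.card = ⌊(1 + 2 * D / δ) ^ finrank ℝ E⌋₊ + 1 := by exact_mod_cast hS
  rw [this] at hcard
  exact (Nat.lt_floor_add_one _).not_ge (by exact_mod_cast hcard)

theorem exists_finset_isCover_closedBall (x : E) {D : ℝ} {δ : ℝ≥0} (hD : 0 ≤ D) (hδ : 0 < δ) :
    ∃ T : Finset E, (T : Set E) ⊆ closedBall x D ∧ IsCover δ (closedBall x D) T ∧
      (T.card : ℝ) ≤ (1 + 2 * D / δ) ^ finrank ℝ E := by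
  have hpack : packingNumber δ (closedBall x D) ≠ ⊤ :=
    ne_top_of_le_ne_top (ENat.natCast_ne_top _) (packingNumber_closedBall_le hD hδ)
  have hfin : (maximalSeparatedSet δ (closedBall x D)).Finite := by
    rw [← Set.encard_ne_top_iff, encard_maximalSeparatedSet hpack]
    exact hpack
  have hsub : (hfin.toFinset : Set E) ⊆ closedBall x D := by
    simpa using maximalSeparatedSet_subset
  refine ⟨hfin.toFinset, hsub, by simpa using isCover_maximalSeparatedSet hpack, ?_⟩
  exact card_le_of_isSeparated_of_subset_closedBall hD hδ hsub
    (by simpa using isSeparated_maximalSeparatedSet)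

theorem exists_finset_isCover_image_closedBall {Y : Type*} [PseudoMetricSpace Y] {f : E → Y}
    {K : ℝ≥0} (hf : LipschitzWith K f) (x : E) {D : ℝ} {ε : ℝ≥0} (hD : 0 ≤ D) (hε : 0 < ε) :
    ∃ T : Finset E, (T : Set E) ⊆ closedBall x D ∧ IsCover ε (f '' closedBall x D) (f '' T) ∧
      (T.card : ℝ) ≤ (1 + 2 * K * D / ε) ^ finrank ℝ E := by
  rcases eq_zero_or_pos K with rfl | hK
  · refine ⟨{x}, by simpa using hD, ?_, by simp⟩
    rintro _ ⟨y, -, rfl⟩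
    exact ⟨f x, by simp, (hf y x).trans (by simp)⟩
  · obtain ⟨T, hTD, hT, hcard⟩ := exists_finset_isCover_closedBall x hD (div_pos hε hK)
    refine ⟨T, hTD, by simpa [mul_div_cancel₀ _ hK.ne'] using hT.image_lipschitz hf, ?_⟩
    convert hcard using 3
    push_cast
    field_simp

end Packing

section Softmax

variable [Fintype A] [Nonempty A]

def softmaxVec (z : A → ℝ) (a : A) : ℝ := Real.exp (z a) / ∑ b, Real.exp (z b)

theorem softmaxVec_pos (z : A → ℝ) (a : A) : 0 < softmaxVec z a :=
  div_pos (Real.exp_pos _) (Finset.sum_pos (fun _ _ => Real.exp_pos _) univ_nonempty)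

theorem sum_softmaxVec (z : A → ℝ) : ∑ a, softmaxVec z a = 1 := by
  simp only [softmaxVec, ← Finset.sum_div]
  exact div_self (Finset.sum_pos (fun _ _ => Real.exp_pos _) univ_nonempty).ne'

omit [Nonempty A] in
/-- Cauchy–Schwarz: the mean absolute deviation is at most the standard deviation, and the
variance of a variable bounded by `K` is at most `K²`. -/
theorem sum_mul_abs_sub_mean_le {p w : A → ℝ} {K : ℝ} (hp : ∀ a, 0 ≤ p a) (hp1 : ∑ a, p a = 1)
    (hw : ∀ a, |w a| ≤ K) :
    ∑ a, p a * |w a - ∑ b, p b * w b| ≤ K := by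
  set S := ∑ b, p b * w b
  have hcs : (∑ a, p a * |w a - S|) ^ 2 ≤ ∑ a, p a * (w a - S) ^ 2 := by
    have := Finset.sum_mul_sq_le_sq_mul_sq univ (fun a => √(p a)) (fun a => √(p a) * |w a - S|)
    simpa [← mul_assoc, Real.mul_self_sqrt (hp _), mul_pow, Real.sq_sqrt (hp _), hp1] using this
  have hvar : ∑ a, p a * (w a - S) ^ 2 = ∑ a, p a * w a ^ 2 - S ^ 2 := by
    calc ∑ a, p a * (w a - S) ^ 2 = ∑ a, (p a * w a ^ 2 - 2 * S * (p a * w a) + S ^ 2 * p a) :=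
          Finset.sum_congr rfl fun a _ => by ring
      _ = ∑ a, p a * w a ^ 2 - S ^ 2 := by
          rw [Finset.sum_add_distrib, Finset.sum_sub_distrib, ← Finset.mul_sum, ← Finset.mul_sum,
            hp1]
          ring
  have hsq : ∑ a, p a * w a ^ 2 ≤ K ^ 2 := by
    calc ∑ a, p a * w a ^ 2 ≤ ∑ a, p a * K ^ 2 := Finset.sum_le_sum fun a _ =>
          mul_le_mul_of_nonneg_left (sq_le_sq' (abs_le.mp (hw a)).1 (abs_le.mp (hw a)).2) (hp a)
      _ = K ^ 2 := by rw [← Finset.sum_mul, hp1, one_mul]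
  obtain ⟨a, -⟩ := Finset.exists_ne_zero_of_sum_ne_zero (hp1 ▸ one_ne_zero)
  have hK : 0 ≤ K := (abs_nonneg _).trans (hw a)
  exact abs_le_of_sq_le_sq' (by nlinarith [sq_nonneg S]) hK |>.2

theorem hasDerivAt_softmaxVec_add_smul (v w : A → ℝ) (a : A) (t : ℝ) :
    HasDerivAt (fun s : ℝ => softmaxVec (v + s • w) a)
      (softmaxVec (v + t • w) a * (w a - ∑ b, softmaxVec (v + t • w) b * w b)) t := by
  have hexp (b : A) : HasDerivAt (fun s : ℝ => Real.exp (v b + s * w b))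
      (Real.exp (v b + t * w b) * w b) t := by
    simpa using ((hasDerivAt_mul_const (w b)).const_add (v b)).exp
  have hZ : 0 < ∑ b, Real.exp (v b + t * w b) :=
    Finset.sum_pos (fun _ _ => Real.exp_pos _) univ_nonempty
  refine ((hexp a).fun_div (HasDerivAt.fun_sum fun b _ => hexp b) hZ.ne').congr_deriv ?_
  simp only [softmaxVec, Pi.add_apply, Pi.smul_apply, smul_eq_mul, div_mul_eq_mul_div,
    ← Finset.sum_div]
  field_simp

/-- Along the segment from `v` to `u` the velocity of the softmax has `ℓ¹` norm equal to a mean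
absolute deviation of `u - v`. -/
theorem sum_abs_softmaxVec_sub_le {u v : A → ℝ} {K : ℝ} (h : ∀ a, |u a - v a| ≤ K) :
    ∑ a, |softmaxVec u a - softmaxVec v a| ≤ K := by
  let p (s : ℝ) : A → ℝ := softmaxVec (v + s • (u - v))
  let f (s : ℝ) : PiLp 1 (fun _ : A => ℝ) := WithLp.toLp 1 (p s)
  let f' (s : ℝ) : PiLp 1 (fun _ : A => ℝ) :=
    WithLp.toLp 1 fun a => p s a * ((u - v) a - ∑ b, p s b * (u - v) b)
  have hf (s : ℝ) : HasDerivAt f (f' s) s :=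
    (PiLp.continuousLinearEquiv 1 ℝ (fun _ : A => ℝ)).symm.hasFDerivAt.comp_hasDerivAt s
      (hasDerivAt_pi.2 fun a => hasDerivAt_softmaxVec_add_smul v (u - v) a s)
  have hf' (s : ℝ) : ‖f' s‖ ≤ K := by
    simp only [f', p, PiLp.norm_eq_of_L1, Real.norm_eq_abs, abs_mul,
      abs_of_pos (softmaxVec_pos _ _)]
    exact sum_mul_abs_sub_mean_le (fun a => (softmaxVec_pos _ a).le) (sum_softmaxVec _)
      (w := u - v) h
  have := norm_image_sub_le_of_norm_deriv_le_segment_01' (fun s _ => (hf s).hasDerivWithinAt)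
    (fun s _ => hf' s)
  simpa [f, p, ← WithLp.toLp_sub, PiLp.norm_eq_of_L1] using this

end Softmax

theorem dotp_eq_inner {d : ℕ} (u v : Fin d → ℝ) :
    dotp u v = inner ℝ (WithLp.toLp 2 u) (WithLp.toLp 2 v) := by
  simp [dotp, PiLp.inner_apply, mul_comm]

theorem nrm2_eq_norm {d : ℕ} (u : Fin d → ℝ) : nrm2 u = ‖WithLp.toLp 2 u‖ := by
  simp [nrm2, EuclideanSpace.norm_eq]

section Policy

variable [Fintype X] [Fintype A] {d : ℕ}

/-- `‖·‖_{∞,1}` is the norm of `X → PiLp 1 _`: sup over states of the `ℓ¹` norm over actions. -/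
def softmaxPolicy (φ : X → A → Fin d → ℝ) (θ : EuclideanSpace ℝ (Fin d)) :
    X → PiLp 1 (fun _ : A => ℝ) :=
  fun x => WithLp.toLp 1 (softmax φ θ.ofLp x)

theorem dist_softmaxPolicy_le_iff (φ : X → A → Fin d → ℝ) (θ θ' : EuclideanSpace ℝ (Fin d))
    {r : ℝ} (hr : 0 ≤ r) :
    dist (softmaxPolicy φ θ) (softmaxPolicy φ θ') ≤ r ↔
      ∀ x, ∑ a, |softmax φ θ.ofLp x a - softmax φ θ'.ofLp x a| ≤ r := by
  simp [softmaxPolicy, dist_pi_le_iff hr, PiLp.dist_eq_of_L1, Real.dist_eq]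

theorem lipschitzWith_softmaxPolicy [Nonempty A] (φ : X → A → Fin d → ℝ) {R : ℝ} (hR : 0 ≤ R)
    (hφ : ∀ x a, nrm2 (φ x a) ≤ R) : LipschitzWith ⟨R, hR⟩ (softmaxPolicy φ) := by
  -- `softmax φ θ x` unfolds to `softmaxVec` of the logits `a ↦ dotp (φ x a) θ`.
  refine LipschitzWith.of_dist_le_mul fun θ θ' => (dist_softmaxPolicy_le_iff φ θ θ'
    (by positivity)).2 fun x => sum_abs_softmaxVec_sub_le fun a => ?_
  calc |dotp (φ x a) θ.ofLp - dotp (φ x a) θ'.ofLp|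
      = |inner ℝ (WithLp.toLp 2 (φ x a)) (θ - θ')| := by
        simp [dotp_eq_inner, inner_sub_right]
    _ ≤ ‖WithLp.toLp 2 (φ x a)‖ * ‖θ - θ'‖ := abs_real_inner_le_norm _ _
    _ ≤ R * dist θ θ' := by
        rw [dist_eq_norm, ← nrm2_eq_norm]
        gcongr
        exact hφ x a

end Policy

/-- covering number of the softmax policy class `Π(D_π)` in the
`‖·‖_{∞,1}` norm: `log N(Π(D_π), ‖·‖_{∞,1}, ε) ≤ d log(1 + 2RD_π/ε)`, expressed as the
existence of an internal `ε`-cover of cardinality at most `(1 + 2RD_π/ε)^d`. -/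
theorem statement17 {X A : Type*} [Fintype X] [Fintype A] [Nonempty X] [Nonempty A] {d : ℕ}
    (R Dπ ε : ℝ) (hε : 0 < ε) (hDπ : 0 ≤ Dπ)
    (φ : X → A → Fin d → ℝ) (hφ : ∀ x a, nrm2 (φ x a) ≤ R) :
    ∃ C : Finset (X → A → ℝ),
      (∀ c ∈ C, ∃ θc : Fin d → ℝ, nrm2 θc ≤ Dπ ∧ c = softmax φ θc) ∧
      (∀ θ : Fin d → ℝ, nrm2 θ ≤ Dπ →
        ∃ c ∈ C, ∀ x, ∑ a, |softmax φ θ x a - c x a| ≤ ε) ∧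
      (C.card : ℝ) ≤ (1 + 2 * R * Dπ / ε) ^ d := by
  classical
  have hR : 0 ≤ R :=
    (Real.sqrt_nonneg _).trans (hφ (Classical.arbitrary X) (Classical.arbitrary A))
  obtain ⟨T, hTD, hT, hcard⟩ := exists_finset_isCover_image_closedBall
    (lipschitzWith_softmaxPolicy φ hR hφ) 0 hDπ (ε := ⟨ε, hε.le⟩) hε
  refine ⟨T.image fun t => softmax φ t.ofLp, ?_, fun θ hθ => ?_, ?_⟩
  · simp only [Finset.mem_image]
    rintro _ ⟨t, ht, rfl⟩
    exact ⟨t.ofLp, by simpa [nrm2_eq_norm] using hTD ht, rfl⟩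
  · obtain ⟨_, ⟨t, ht, rfl⟩, hdist⟩ := hT (Set.mem_image_of_mem _
      (show WithLp.toLp 2 θ ∈ closedBall 0 Dπ by simpa [nrm2_eq_norm] using hθ))
    refine ⟨_, Finset.mem_image_of_mem _ ht, (dist_softmaxPolicy_le_iff φ _ _ hε.le).1 ?_⟩
    exact_mod_cast edist_le_coe.1 hdist
  · rw [finrank_euclideanSpace_fin] at hcard
    exact (Nat.cast_le.2 Finset.card_image_le).trans hcard

end Paper
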